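/- Let m ≥ 1 be a natural number, ϖ_m = 2∫_0^1 (1-t^m)^(-1/2) dt, and let φ : ℝ → ℝ satisfy: x = ∫_0^{φ(x)} (1-t^m)^(-1/2) dt and 0 ≤ φ(x) ≤ 1 for all x ∈ [0, ϖ_m/2], and φ(ϖ_m - x) = φ(x) for all x ∈ [0, ϖ_m]. Then ∫_0^{ϖ_m} φ(x)^m dx = (2/(m+2))·ϖ_m. -/

import Mathlib

/-!
Substituting `x = l_m(r)`, where `φ` inverts the arc length `l_m` on `[0, ϖ_m / 2]`, turns
`∫_0^{ϖ_m/2} φ^m` into `∫_0^1 r^m (1 - r^m)^(-1/2) dr`. The function `r √(1 - r^m)` has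
derivative `(1 - r^m)^(-1/2) - (m+2)/2 · r^m (1 - r^m)^(-1/2)` and vanishes at both ends of
`[0, 1]`, so this integral is `2/(m+2) · ϖ_m / 2`. The symmetry `φ(ϖ_m - x) = φ(x)` doubles it.
-/

open MeasureTheory Set intervalIntegral

section

variable {m : ℕ}

noncomputable def cloverDensity (m : ℕ) (t : ℝ) : ℝ := (1 - t ^ m) ^ (-(1/2) : ℝ)

noncomputable def cloverArcLength (m : ℕ) (r : ℝ) : ℝ :=
  ∫ t in (0:ℝ)..r, cloverDensity m t

theorem cloverDensity_pos (hm : m ≠ 0) {t : ℝ} (h0 : 0 ≤ t) (h1 : t < 1) :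
    0 < cloverDensity m t :=
  Real.rpow_pos_of_pos (sub_pos.2 (pow_lt_one₀ h0 h1 hm)) _

theorem measurable_cloverDensity (m : ℕ) : Measurable (cloverDensity m) := by
  unfold cloverDensity; fun_prop

theorem continuousAt_cloverDensity (hm : m ≠ 0) {t : ℝ} (h0 : 0 ≤ t) (h1 : t < 1) :
    ContinuousAt (cloverDensity m) t :=
  (continuousAt_const.sub (continuousAt_id.pow m)).rpow_const
    (Or.inl (sub_pos.2 (pow_lt_one₀ h0 h1 hm)).ne')

/-- On `[0, 1]`, `1 - t ≤ 1 - t ^ m`, so the density is dominated by `(1 - t) ^ (-1/2)`. -/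
theorem intervalIntegrable_cloverDensity (hm : m ≠ 0) :
    IntervalIntegrable (cloverDensity m) volume 0 1 := by
  have hdom : IntervalIntegrable (fun t : ℝ => (1 - t) ^ (-(1/2) : ℝ)) volume 0 1 := by
    simpa using ((intervalIntegrable_rpow' (a := 0) (b := 1)
      (by norm_num : (-1:ℝ) < -(1/2))).comp_sub_left 1).symm
  refine hdom.mono_fun (measurable_cloverDensity m).aestronglyMeasurable ?_
  rw [uIoc_of_le zero_le_one, ← Measure.restrict_congr_set Ioo_ae_eq_Ioc]
  filter_upwards [ae_restrict_mem measurableSet_Ioo] with t ⟨ht0, ht1⟩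
  rw [Real.norm_of_nonneg (cloverDensity_pos hm ht0.le ht1).le,
    Real.norm_of_nonneg (Real.rpow_nonneg (sub_pos.2 ht1).le _)]
  exact Real.rpow_le_rpow_of_nonpos (sub_pos.2 ht1)
    (sub_le_sub_left (pow_le_of_le_one ht0.le ht1.le hm) 1) (by norm_num)

theorem hasDerivAt_cloverArcLength (hm : m ≠ 0) {r : ℝ} (hr : r ∈ Ioo (0:ℝ) 1) :
    HasDerivAt (cloverArcLength m) (cloverDensity m r) r :=
  integral_hasDerivAt_right
    ((intervalIntegrable_cloverDensity hm).mono_set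
      (uIcc_subset_uIcc_left (by simp [hr.1.le, hr.2.le])))
    (measurable_cloverDensity m).aestronglyMeasurable.stronglyMeasurableAtFilter
    (continuousAt_cloverDensity hm hr.1.le hr.2)

theorem continuousOn_cloverArcLength (hm : m ≠ 0) :
    ContinuousOn (cloverArcLength m) (Icc 0 1) := by
  have h := continuousOn_primitive_interval' (intervalIntegrable_cloverDensity hm) left_mem_uIcc
  rwa [uIcc_of_le zero_le_one] at h

theorem strictMonoOn_cloverArcLength (hm : m ≠ 0) :
    StrictMonoOn (cloverArcLength m) (Icc 0 1) := by
  refine strictMonoOn_of_deriv_pos (convex_Icc 0 1) (continuousOn_cloverArcLength hm) fun r hr => ?_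
  rw [interior_Icc] at hr
  rw [(hasDerivAt_cloverArcLength hm hr).deriv]
  exact cloverDensity_pos hm hr.1.le hr.2

@[simp]
theorem cloverArcLength_zero (m : ℕ) : cloverArcLength m 0 = 0 :=
  integral_same

theorem mapsTo_cloverArcLength (hm : m ≠ 0) :
    MapsTo (cloverArcLength m) (Icc 0 1) (Icc 0 (cloverArcLength m 1)) := fun r hr => by
  have hmono := (strictMonoOn_cloverArcLength hm).monotoneOn
  have h0 := hmono (left_mem_Icc.2 zero_le_one) hr hr.1
  rw [cloverArcLength_zero] at h0
  exact ⟨h0, hmono hr (right_mem_Icc.2 zero_le_one) hr.2⟩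

theorem hasDerivAt_mul_one_sub_pow_rpow_half {r : ℝ} (hr : 0 < 1 - r ^ m) :
    HasDerivAt (fun s : ℝ => s * (1 - s ^ m) ^ (1/2 : ℝ))
      (cloverDensity m r - (m + 2) / 2 * (r ^ m * cloverDensity m r)) r := by
  have hsqrt : HasDerivAt (fun s : ℝ => (1 - s ^ m) ^ (1/2 : ℝ))
      (-(m * r ^ (m - 1)) * (1/2) * (1 - r ^ m) ^ ((1/2 : ℝ) - 1)) r :=
    ((hasDerivAt_pow m r).const_sub 1).rpow_const (Or.inl hr.ne')
  refine ((hasDerivAt_id r).mul hsqrt).congr_deriv ?_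
  have hhalf : (1 - r ^ m) ^ (1/2 : ℝ) = (1 - r ^ m) * cloverDensity m r := by
    rw [cloverDensity, ← Real.rpow_one_add' hr.le (by norm_num)]
    norm_num
  have hpow : (m : ℝ) * r ^ (m - 1) * r = m * r ^ m := by
    cases m <;> simp [pow_succ, mul_assoc]
  rw [show (1/2 : ℝ) - 1 = -(1/2) by norm_num, hhalf, id_eq]
  unfold cloverDensity
  linear_combination (-(1/2 * (1 - r ^ m) ^ (-(1/2) : ℝ))) * hpow

theorem integral_pow_mul_cloverDensity (hm : m ≠ 0) :
    ∫ r in (0:ℝ)..1, r ^ m * cloverDensity m r = 2 / (m + 2) * cloverArcLength m 1 := by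
  have hint : IntervalIntegrable (cloverDensity m) volume 0 1 := intervalIntegrable_cloverDensity hm
  have hint_pow : IntervalIntegrable (fun r => r ^ m * cloverDensity m r) volume 0 1 :=
    hint.continuousOn_mul (continuousOn_pow m)
  have hcont : Continuous fun s : ℝ => s * (1 - s ^ m) ^ (1/2 : ℝ) :=
    continuous_id.mul ((continuous_const.sub (continuous_pow m)).rpow_const
      fun _ => Or.inr (by norm_num))
  have hFTC := integral_eq_sub_of_hasDerivAt_of_le zero_le_one hcont.continuousOn
    (fun r hr => hasDerivAt_mul_one_sub_pow_rpow_half (sub_pos.2 (pow_lt_one₀ hr.1.le hr.2 hm)))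
    (hint.sub (hint_pow.const_mul _))
  rw [integral_sub hint (hint_pow.const_mul _), intervalIntegral.integral_const_mul] at hFTC
  norm_num at hFTC
  rw [cloverArcLength]
  field_simp
  linarith

theorem integral_comp_eq_integral_cloverDensity_smul {E : Type*} [NormedAddCommGroup E]
    [NormedSpace ℝ E] (hm : m ≠ 0) {φ : ℝ → ℝ}
    (hφ : LeftInvOn φ (cloverArcLength m) (Icc 0 1)) (g : ℝ → E) :
    ∫ x in (0:ℝ)..cloverArcLength m 1, g (φ x) =
      ∫ r in (0:ℝ)..1, cloverDensity m r • g r := by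
  have hchange := integral_Icc_deriv_smul_of_deriv_nonneg (g := g ∘ φ)
    (continuousOn_cloverArcLength hm) (fun r hr => hasDerivAt_cloverArcLength hm hr)
    (fun r hr => (cloverDensity_pos hm hr.1.le hr.2).le) zero_le_one
  rw [cloverArcLength_zero] at hchange
  rw [integral_of_le (mapsTo_cloverArcLength hm (right_mem_Icc.2 zero_le_one)).1,
    integral_of_le zero_le_one, ← integral_Icc_eq_integral_Ioc, ← integral_Icc_eq_integral_Ioc,
    ← Function.comp_def g φ, ← hchange]
  exact setIntegral_congr_fun measurableSet_Icc fun r hr => by rw [Function.comp_apply, hφ hr]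

end

theorem integral_eq_two_mul_integral_half_of_symm {g : ℝ → ℝ} {a : ℝ} (ha : 0 ≤ a)
    (hg : IntervalIntegrable g volume 0 (a / 2)) (hsymm : ∀ x ∈ Icc 0 a, g (a - x) = g x) :
    ∫ x in (0:ℝ)..a, g x = 2 * ∫ x in (0:ℝ)..a / 2, g x := by
  have hreflect : EqOn (fun x => g (a - x)) g (uIcc (a / 2) a) := fun x hx => by
    rw [uIcc_of_le (by linarith)] at hx
    exact hsymm x ⟨by linarith [hx.1], hx.2⟩
  have hupper : ∫ x in a / 2..a, g x = ∫ x in (0:ℝ)..a / 2, g x := by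
    rw [← integral_congr hreflect, integral_comp_sub_left, sub_self, sub_half]
  have hint_upper : IntervalIntegrable g volume (a / 2) a := by
    have h := hg.comp_sub_left a
    rw [sub_zero, sub_half] at h
    exact h.symm.congr (hreflect.mono uIoc_subset_uIcc)
  rw [← integral_add_adjacent_intervals hg hint_upper, hupper, two_mul]

/-- **Initial value `I_m(m) = (2/(m+2)) ϖ_m`.**
Let `m ≥ 1`, `ϖ = 2 ∫_0^1 (1 - t^m)^(-1/2) dt`, and `φ` the `m`-clover function.
Then `∫_0^ϖ φ(x)^m dx = (2/(m+2)) ϖ`. -/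
theorem clover_integral_m (m : ℕ) (hm : 1 ≤ m)
    (ϖ : ℝ) (hϖ : ϖ = 2 * ∫ t in (0:ℝ)..1, (1 - t ^ m) ^ (-(1/2) : ℝ))
    (φ : ℝ → ℝ)
    (hφ : ∀ x ∈ Set.Icc 0 (ϖ / 2),
      x = ∫ t in (0:ℝ)..(φ x), (1 - t ^ m) ^ (-(1/2) : ℝ))
    (hφ01 : ∀ x ∈ Set.Icc 0 (ϖ / 2), φ x ∈ Set.Icc (0:ℝ) 1)
    (hφsymm : ∀ x ∈ Set.Icc 0 ϖ, φ (ϖ - x) = φ x) :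
    ∫ x in (0:ℝ)..ϖ, φ x ^ m = (2 / ((m : ℝ) + 2)) * ϖ := by
  have hm0 : m ≠ 0 := Nat.one_le_iff_ne_zero.1 hm
  have hϖ' : ϖ = 2 * cloverArcLength m 1 := hϖ
  have hhalf : ϖ / 2 = cloverArcLength m 1 := by rw [hϖ']; ring
  rw [hhalf] at hφ hφ01
  have hmaps : MapsTo φ (Icc 0 (cloverArcLength m 1)) (Icc 0 1) := hφ01
  have hright : RightInvOn φ (cloverArcLength m) (Icc 0 (cloverArcLength m 1)) :=
    fun x hx => (hφ x hx).symm
  have hleft : LeftInvOn φ (cloverArcLength m) (Icc 0 1) :=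
    (strictMonoOn_cloverArcLength hm0).injOn.rightInvOn_of_leftInvOn hright
      (mapsTo_cloverArcLength hm0) hmaps
  have hmono : MonotoneOn φ (Icc 0 (cloverArcLength m 1)) :=
    Function.monotoneOn_of_rightInvOn_of_mapsTo (strictMonoOn_cloverArcLength hm0).monotoneOn
      hright hmaps
  have hL : 0 ≤ cloverArcLength m 1 :=
    (mapsTo_cloverArcLength hm0 (right_mem_Icc.2 zero_le_one)).1
  have hint_half : IntervalIntegrable (fun x => φ x ^ m) volume 0 (ϖ / 2) := by
    rw [hhalf]
    refine MonotoneOn.intervalIntegrable ?_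
    rw [uIcc_of_le hL]
    exact fun x hx y hy hxy => pow_le_pow_left₀ (hmaps hx).1 (hmono hx hy hxy) m
  rw [integral_eq_two_mul_integral_half_of_symm (by linarith) hint_half
    (fun x hx => by rw [hφsymm x hx]), hhalf,
    integral_comp_eq_integral_cloverDensity_smul hm0 hleft (· ^ m)]
  simp only [smul_eq_mul, mul_comm (cloverDensity m _)]
  rw [integral_pow_mul_cloverDensity hm0, hϖ']
  ring
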